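/- For ξ ∈ ℝ³ with ξ ≠ 0, the Hessian matrix of the function p(ξ) = (1/2)ξ₃|ξ|² equals the matrix with rows (ξ₃, 0, ξ₁), (0, ξ₃, ξ₂), (ξ₁, ξ₂, 3ξ₃), and this matrix has rank at least 2. -/

import Mathlib

noncomputable def pd (f : (Fin 3 → ℝ) → ℝ) (x : Fin 3 → ℝ) (k : Fin 3) : ℝ :=
  fderiv ℝ f x (Pi.single k 1)

noncomputable def hess (f : (Fin 3 → ℝ) → ℝ) (x : Fin 3 → ℝ) : Matrix (Fin 3) (Fin 3) ℝ :=
  Matrix.of fun k l => pd (fun y => pd f y l) x k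

noncomputable def P (i : Fin 3) : (Fin 3 → ℝ) →L[ℝ] ℝ :=
  ContinuousLinearMap.proj i

lemma hasF_coord (y : Fin 3 → ℝ) (i : Fin 3) :
    HasFDerivAt (fun x : Fin 3 → ℝ => x i) (P i) y :=
  (P i).hasFDerivAt

lemma hasF_sq (y : Fin 3 → ℝ) (i : Fin 3) :
    HasFDerivAt (fun x : Fin 3 → ℝ => x i ^ 2) ((2 * y i) • P i) y := by
  have h : HasFDerivAt (fun x : Fin 3 → ℝ => x i * x i) _ y := (hasF_coord y i).mul (hasF_coord y i)
  have e : (fun x : Fin 3 → ℝ => x i * x i) = fun x => x i ^ 2 := by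
    funext x; ring
  rw [e] at h
  rw [two_mul, add_smul]
  exact h

lemma pd_of_hasFDerivAt {f : (Fin 3 → ℝ) → ℝ} {L : (Fin 3 → ℝ) →L[ℝ] ℝ} {y}
    (h : HasFDerivAt f L y) (k : Fin 3) :
    pd f y k = L (Pi.single k 1) := by rw [pd, h.fderiv]

lemma hasF_f (y : Fin 3 → ℝ) :
    HasFDerivAt (fun x : Fin 3 → ℝ => (1 / 2) * x 2 * (x 0 ^ 2 + x 1 ^ 2 + x 2 ^ 2))
      ((1/2 * y 2) • (((2 * y 0) • P 0 + (2 * y 1) • P 1) + (2 * y 2) • P 2)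
        + (y 0 ^ 2 + y 1 ^ 2 + y 2 ^ 2) • ((1/2 : ℝ) • P 2)) y :=
  (((hasF_coord y 2).const_mul (1/2)).mul
    (((hasF_sq y 0).add (hasF_sq y 1)).add (hasF_sq y 2)))

lemma pd_f0 (y : Fin 3 → ℝ) :
    pd (fun x : Fin 3 → ℝ => (1 / 2) * x 2 * (x 0 ^ 2 + x 1 ^ 2 + x 2 ^ 2)) y 0
      = y 2 * y 0 := by
  rw [pd_of_hasFDerivAt (hasF_f y)]
  simp [P, Pi.single_apply]
  ring

lemma pd_f1 (y : Fin 3 → ℝ) :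
    pd (fun x : Fin 3 → ℝ => (1 / 2) * x 2 * (x 0 ^ 2 + x 1 ^ 2 + x 2 ^ 2)) y 1
      = y 2 * y 1 := by
  rw [pd_of_hasFDerivAt (hasF_f y)]
  simp [P, Pi.single_apply]
  ring

lemma pd_f2 (y : Fin 3 → ℝ) :
    pd (fun x : Fin 3 → ℝ => (1 / 2) * x 2 * (x 0 ^ 2 + x 1 ^ 2 + x 2 ^ 2)) y 2
      = 1/2 * (y 0 ^ 2) + 1/2 * (y 1 ^ 2) + 3/2 * (y 2 ^ 2) := by
  rw [pd_of_hasFDerivAt (hasF_f y)]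
  simp [P, Pi.single_apply]
  ring

lemma pd_g0 (y : Fin 3 → ℝ) (k : Fin 3) :
    pd (fun x : Fin 3 → ℝ => x 2 * x 0) y k = (y 2) • (if k = 0 then (1:ℝ) else 0) + (y 0) • (if k = 2 then (1:ℝ) else 0) := by
  rw [pd_of_hasFDerivAt (f := fun x : Fin 3 → ℝ => x 2 * x 0) ((hasF_coord y 2).mul (hasF_coord y 0))]
  simp [P, Pi.single_apply, eq_comm]

lemma pd_g1 (y : Fin 3 → ℝ) (k : Fin 3) :
    pd (fun x : Fin 3 → ℝ => x 2 * x 1) y k = (y 2) • (if k = 1 then (1:ℝ) else 0) + (y 1) • (if k = 2 then (1:ℝ) else 0) := by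
  rw [pd_of_hasFDerivAt (f := fun x : Fin 3 → ℝ => x 2 * x 1) ((hasF_coord y 2).mul (hasF_coord y 1))]
  simp [P, Pi.single_apply, eq_comm]

lemma pd_g2 (y : Fin 3 → ℝ) (k : Fin 3) :
    pd (fun x : Fin 3 → ℝ => 1/2 * (x 0 ^ 2) + 1/2 * (x 1 ^ 2) + 3/2 * (x 2 ^ 2)) y k =
      (y 0) • (if k = 0 then (1:ℝ) else 0) + (y 1) • (if k = 1 then (1:ℝ) else 0)
        + (3 * y 2) • (if k = 2 then (1:ℝ) else 0) := by
  rw [pd_of_hasFDerivAt (f := fun x : Fin 3 → ℝ => 1/2 * (x 0 ^ 2) + 1/2 * (x 1 ^ 2) + 3/2 * (x 2 ^ 2)) ((((hasF_sq y 0).const_mul (1/2)).add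
    ((hasF_sq y 1).const_mul (1/2))).add ((hasF_sq y 2).const_mul (3/2)))]
  simp [P, Pi.single_apply, eq_comm]
  ring_nf

lemma rank_ge_two_of_cols (M : Matrix (Fin 3) (Fin 3) ℝ) (j₁ j₂ : Fin 3)
    (h : LinearIndependent ℝ ![fun i => M i j₁, fun i => M i j₂]) : 2 ≤ M.rank := by
  rw [Matrix.rank]
  have hle : Submodule.span ℝ (Set.range ![fun i => M i j₁, fun i => M i j₂])
      ≤ LinearMap.range M.mulVecLin := by
    rw [Submodule.span_le]
    rintro v ⟨i, rfl⟩
    fin_cases i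
    · exact ⟨Pi.single j₁ 1, by ext i; simp [Matrix.mulVecLin, Matrix.mulVec_single]⟩
    · exact ⟨Pi.single j₂ 1, by ext i; simp [Matrix.mulVecLin, Matrix.mulVec_single]⟩
  calc (2 : ℕ) = Module.finrank ℝ (Submodule.span ℝ
        (Set.range ![fun i => M i j₁, fun i => M i j₂])) := by
        rw [finrank_span_eq_card h]; simp
    _ ≤ Module.finrank ℝ (LinearMap.range M.mulVecLin) := Submodule.finrank_mono hle

theorem hess_half_xi3_normsq (ξ : Fin 3 → ℝ) (hξ : ξ ≠ 0) :
    hess (fun x => (1 / 2) * x 2 * (x 0 ^ 2 + x 1 ^ 2 + x 2 ^ 2)) ξ =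
      !![ξ 2, 0, ξ 0; 0, ξ 2, ξ 1; ξ 0, ξ 1, 3 * ξ 2] ∧
    2 ≤ (!![ξ 2, 0, ξ 0; 0, ξ 2, ξ 1; ξ 0, ξ 1, 3 * ξ 2] : Matrix (Fin 3) (Fin 3) ℝ).rank := by
  constructor
  · ext k l
    rw [hess, Matrix.of_apply]
    fin_cases l
    · show pd (fun y => pd (fun x : Fin 3 → ℝ => (1 / 2) * x 2 * (x 0 ^ 2 + x 1 ^ 2 + x 2 ^ 2)) y 0) ξ k
        = !![ξ 2, 0, ξ 0; 0, ξ 2, ξ 1; ξ 0, ξ 1, 3 * ξ 2] k 0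
      have e : (fun y => pd (fun x : Fin 3 → ℝ => (1 / 2) * x 2 * (x 0 ^ 2 + x 1 ^ 2 + x 2 ^ 2)) y 0)
          = fun y : Fin 3 → ℝ => y 2 * y 0 := funext fun y => pd_f0 y
      rw [e, pd_g0]
      fin_cases k <;> simp
    · show pd (fun y => pd (fun x : Fin 3 → ℝ => (1 / 2) * x 2 * (x 0 ^ 2 + x 1 ^ 2 + x 2 ^ 2)) y 1) ξ k
        = !![ξ 2, 0, ξ 0; 0, ξ 2, ξ 1; ξ 0, ξ 1, 3 * ξ 2] k 1
      have e : (fun y => pd (fun x : Fin 3 → ℝ => (1 / 2) * x 2 * (x 0 ^ 2 + x 1 ^ 2 + x 2 ^ 2)) y 1)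
          = fun y : Fin 3 → ℝ => y 2 * y 1 := funext fun y => pd_f1 y
      rw [e, pd_g1]
      fin_cases k <;> simp
    · show pd (fun y => pd (fun x : Fin 3 → ℝ => (1 / 2) * x 2 * (x 0 ^ 2 + x 1 ^ 2 + x 2 ^ 2)) y 2) ξ k
        = !![ξ 2, 0, ξ 0; 0, ξ 2, ξ 1; ξ 0, ξ 1, 3 * ξ 2] k 2
      have e : (fun y => pd (fun x : Fin 3 → ℝ => (1 / 2) * x 2 * (x 0 ^ 2 + x 1 ^ 2 + x 2 ^ 2)) y 2)
          = fun y : Fin 3 → ℝ => 1/2 * (y 0 ^ 2) + 1/2 * (y 1 ^ 2) + 3/2 * (y 2 ^ 2) :=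
        funext fun y => pd_f2 y
      rw [e, pd_g2]
      fin_cases k <;> simp
  · set M : Matrix (Fin 3) (Fin 3) ℝ := !![ξ 2, 0, ξ 0; 0, ξ 2, ξ 1; ξ 0, ξ 1, 3 * ξ 2] with hM
    have hne : ξ 0 ≠ 0 ∨ ξ 1 ≠ 0 ∨ ξ 2 ≠ 0 := by
      by_contra h
      push_neg at h
      apply hξ
      funext i
      fin_cases i <;> simp [h.1, h.2.1, h.2.2]
    by_cases h2 : ξ 2 ≠ 0
    · apply rank_ge_two_of_cols M 0 1
      rw [LinearIndependent.pair_iff]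
      intro s t hst
      have h0 := congrFun hst 0
      have h1 := congrFun hst 1
      simp [hM] at h0 h1
      constructor
      · rcases h0 with h | h; exact h; exact absurd h h2
      · rcases h1 with h | h; exact h; exact absurd h h2
    · push_neg at h2
      rcases hne with h0 | h1 | h
      · apply rank_ge_two_of_cols M 0 2
        rw [LinearIndependent.pair_iff]
        intro s t hst
        have ha : s * ξ 0 = 0 := by simpa [hM, h2, Matrix.vecHead, Matrix.vecTail] using congrFun hst 2
        have hb : t * ξ 0 = 0 := by simpa [hM, h2, Matrix.vecHead, Matrix.vecTail] using congrFun hst 0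
        exact ⟨by rcases mul_eq_zero.1 ha with h | h; exact h; exact absurd h h0,
          by rcases mul_eq_zero.1 hb with h | h; exact h; exact absurd h h0⟩
      · apply rank_ge_two_of_cols M 1 2
        rw [LinearIndependent.pair_iff]
        intro s t hst
        have ha : s * ξ 1 = 0 := by simpa [hM, h2, Matrix.vecHead, Matrix.vecTail] using congrFun hst 2
        have hb : t * ξ 1 = 0 := by simpa [hM, h2, Matrix.vecHead, Matrix.vecTail] using congrFun hst 1
        exact ⟨by rcases mul_eq_zero.1 ha with h | h; exact h; exact absurd h h1,
          by rcases mul_eq_zero.1 hb with h | h; exact h; exact absurd h h1⟩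
      · exact absurd h2 h
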